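/- arXiv:2210.16655 — 3 statements merged into one kernel-verified Lean document; each statement's English description precedes it below -/
import Mathlib

section
/- Let (X,Y) be a random vector on ℝ² whose law has a jointly continuous, strictly positive probability density function f with respect to Lebesgue measure. Then X and Y are independent if and only if for every choice of quantile splits 0 < p₁ < q₁ < 1 and 0 < p₂ < q₂ < 1, the conditional covariance Cov_A[X,Y] equals 0, where A = {Q_X(p₁) ≤ X ≤ Q_X(q₁)} ∩ {Q_Y(p₂) ≤ Y ≤ Q_Y(q₂)} is the corresponding quantile set. -/
open MeasureTheory ProbabilityTheory Set

/-- Conditional covariance of `X` and `Y` given the event `A`: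
`Cov_A[X,Y] = E[X·Y | A] − E[X | A] · E[Y | A]`, where `E[· | A]` is the expectation
with respect to the conditional probability `P[|A]`. -/
noncomputable def condCov {Ω : Type*} [MeasurableSpace Ω] (P : Measure Ω) (A : Set Ω)
    (X Y : Ω → ℝ) : ℝ :=
  (∫ ω, X ω * Y ω ∂(P[|A])) - (∫ ω, X ω ∂(P[|A])) * (∫ ω, Y ω ∂(P[|A]))

/-- The cumulative distribution function of a real random variable `X` under `P`. -/
noncomputable def cdfOf {Ω : Type*} [MeasurableSpace Ω] (P : Measure Ω) (X : Ω → ℝ) : ℝ → ℝ :=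
  fun x => (P {ω | X ω ≤ x}).toReal

/-- The quantile function of `X` under `P`, i.e. the inverse of its CDF
(well defined on `(0,1)` when the CDF is a bijection onto `(0,1)`). -/
noncomputable def quantileOf {Ω : Type*} [MeasurableSpace Ω] (P : Measure Ω) (X : Ω → ℝ) : ℝ → ℝ :=
  Function.invFun (cdfOf P X)

/-- The quantile set `A = {Q_X(p₁) ≤ X ≤ Q_X(q₁)} ∩ {Q_Y(p₂) ≤ Y ≤ Q_Y(q₂)}`
associated with the quantile splits `p₁ < q₁` and `p₂ < q₂`. -/
noncomputable def quantileSet {Ω : Type*} [MeasurableSpace Ω] (P : Measure Ω) (X Y : Ω → ℝ)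
    (p₁ q₁ p₂ q₂ : ℝ) : Set Ω :=
  {ω | quantileOf P X p₁ ≤ X ω ∧ X ω ≤ quantileOf P X q₁} ∩
    {ω | quantileOf P Y p₂ ≤ Y ω ∧ Y ω ≤ quantileOf P Y q₂}

/-! Independence makes the conditional law of `(X, Y)` given any rectangle a product measure, so
the conditional covariance vanishes.

Conversely, the CDFs of `X` and `Y` are strictly increasing with values in `(0, 1)`, so every
rectangle `[a, b] × [c, d]` is a quantile set, and the vanishing of the conditional covariance
reads `(∬ x y f) (∬ f) = (∬ x f) (∬ y f)` over it. Differentiating this identity with respect to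
the four sides of the rectangle gives `f (a, c) f (b, d) = f (a, d) f (b, c)`, so `f` is a product
`g x * h y` and the law of `(X, Y)` is a product measure. -/

section Calculus

open intervalIntegral

lemma mul_add_mul_eq_of_intervalIntegral_mul_eq {p q r s : ℝ → ℝ} (hp : Continuous p)
    (hq : Continuous q) (hr : Continuous r) (hs : Continuous s)
    (h : ∀ a b : ℝ, (∫ x in a..b, p x) * (∫ x in a..b, q x)
      = (∫ x in a..b, r x) * (∫ x in a..b, s x)) (a b : ℝ) :
    p a * q b + p b * q a = r a * s b + r b * s a := by
  have hderiv {g : ℝ → ℝ} (hg : Continuous g) (a b : ℝ) :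
      HasDerivAt (fun u => ∫ x in a..u, g x) (g b) b :=
    (hg.integral_hasStrictDerivAt a b).hasDerivAt
  have hderiv_left {g : ℝ → ℝ} (hg : Continuous g) (a b : ℝ) :
      HasDerivAt (fun u => ∫ x in u..b, g x) (-g a) a := by
    simpa only [← integral_symm] using (hderiv hg b a).fun_neg
  have h_right (a b : ℝ) : p b * (∫ x in a..b, q x) + (∫ x in a..b, p x) * q b
      = r b * (∫ x in a..b, s x) + (∫ x in a..b, r x) * s b := by
    have hpq := (hderiv hp a b).fun_mul (hderiv hq a b)
    rw [funext (h a)] at hpq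
    exact hpq.unique ((hderiv hr a b).fun_mul (hderiv hs a b))
  have hpq := ((hderiv_left hq a b).const_mul (p b)).fun_add
    ((hderiv_left hp a b).mul_const (q b))
  rw [funext (h_right · b)] at hpq
  have := hpq.unique (((hderiv_left hs a b).const_mul (r b)).fun_add
    ((hderiv_left hr a b).mul_const (s b)))
  linarith

lemma mul_eq_mul_of_intervalIntegral_moment_eq {u v : ℝ → ℝ} (hu : Continuous u)
    (hv : Continuous v)
    (h : ∀ a b : ℝ, a < b → (∫ x in a..b, x * u x) * (∫ x in a..b, v x)
      = (∫ x in a..b, x * v x) * (∫ x in a..b, u x)) (a b : ℝ) :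
    u a * v b = u b * v a := by
  have h_all (a b : ℝ) : (∫ x in a..b, x * u x) * (∫ x in a..b, v x)
      = (∫ x in a..b, x * v x) * (∫ x in a..b, u x) := by
    rcases lt_trichotomy a b with hab | rfl | hab
    · exact h a b hab
    · simp
    · simpa only [integral_symm b a, neg_mul_neg] using h b a hab
  have key := mul_add_mul_eq_of_intervalIntegral_mul_eq (p := fun x => x * u x)
    (r := fun x => x * v x) (by fun_prop) hv (by fun_prop) hu h_all a b
  have : (a - b) * (u a * v b - u b * v a) = 0 := by linear_combination key
  rcases mul_eq_zero.mp this with hab | huv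
  · rw [sub_eq_zero.mp hab]
  · linarith

lemma mul_eq_mul_of_rectangle_moment_eq {f : ℝ × ℝ → ℝ} (hf : Continuous f)
    (h : ∀ a b c d : ℝ, a < b → c < d →
      (∫ x in a..b, ∫ y in c..d, x * y * f (x, y)) * (∫ x in a..b, ∫ y in c..d, f (x, y))
        = (∫ x in a..b, ∫ y in c..d, x * f (x, y)) * (∫ x in a..b, ∫ y in c..d, y * f (x, y)))
    (a b c d : ℝ) :
    f (a, c) * f (b, d) = f (a, d) * f (b, c) := by
  have h_slices (c d : ℝ) (hcd : c < d) (σ τ : ℝ) :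
      (∫ y in c..d, y * f (σ, y)) * (∫ y in c..d, f (τ, y))
        = (∫ y in c..d, y * f (τ, y)) * (∫ y in c..d, f (σ, y)) := by
    refine mul_eq_mul_of_intervalIntegral_moment_eq (u := fun x => ∫ y in c..d, y * f (x, y))
      (v := fun x => ∫ y in c..d, f (x, y)) ?_ ?_ (fun a b hab => ?_) σ τ
    · exact continuous_parametric_intervalIntegral_of_continuous' (by fun_prop) c d
    · exact continuous_parametric_intervalIntegral_of_continuous' (by fun_prop) c d
    · have := h a b c d hab hcd
      simpa only [mul_assoc, intervalIntegral.integral_const_mul] using this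
  exact mul_eq_mul_of_intervalIntegral_moment_eq (u := fun y => f (a, y)) (v := fun y => f (b, y))
    (by fun_prop) (by fun_prop) (fun c d hcd => h_slices c d hcd a b) c d

end Calculus

section Conditioning

variable {Ω 𝓧 𝓨 : Type*} [MeasurableSpace Ω] [MeasurableSpace 𝓧] [MeasurableSpace 𝓨]

lemma map_cond_preimage {β : Type*} [MeasurableSpace β] (P : Measure Ω) {T : Ω → β}
    (hT : Measurable T) {S : Set β} (hS : MeasurableSet S) :
    (P[|T ⁻¹' S]).map T = (P.map T)[|S] := by
  simp only [ProbabilityTheory.cond]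
  rw [Measure.map_smul, ← Measure.restrict_map hT hS, Measure.map_apply hT hS]

lemma cond_prod_eq_prod_cond (α : Measure 𝓧) (β : Measure 𝓨) [IsFiniteMeasure α]
    [IsFiniteMeasure β] (s : Set 𝓧) (t : Set 𝓨) :
    (α.prod β)[|s ×ˢ t] = α[|s].prod β[|t] := by
  simp only [ProbabilityTheory.cond]
  rw [Measure.prod_prod, Measure.prod_smul_left, Measure.prod_smul_right, smul_smul,
    Measure.prod_restrict, ENNReal.mul_inv (.inr (measure_ne_top _ _)) (.inl (measure_ne_top _ _))]

lemma indepFun_of_map_eq_prod {P : Measure Ω} [IsProbabilityMeasure P] {X : Ω → 𝓧} {Y : Ω → 𝓨}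
    (hX : Measurable X) (hY : Measurable Y) {α : Measure 𝓧} {β : Measure 𝓨} [SFinite α]
    [SFinite β] (h : P.map (fun ω => (X ω, Y ω)) = α.prod β) :
    IndepFun X Y P := by
  have hXmap : P.map X = β univ • α := by
    rw [← Measure.map_fst_prod, ← h, Measure.map_map measurable_fst (hX.prodMk hY)]
    rfl
  have hYmap : P.map Y = α univ • β := by
    rw [← Measure.map_snd_prod, ← h, Measure.map_map measurable_snd (hX.prodMk hY)]
    rfl
  have hmass : β univ * α univ = 1 := by
    rw [mul_comm, ← Measure.prod_prod, univ_prod_univ, ← h,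
      Measure.map_apply (hX.prodMk hY) MeasurableSet.univ, preimage_univ, measure_univ]
  rw [indepFun_iff_map_prod_eq_prod_map_map hX.aemeasurable hY.aemeasurable, h, hXmap, hYmap,
    Measure.prod_smul_left, Measure.prod_smul_right, smul_smul, hmass, one_smul]

lemma ProbabilityTheory.IndepFun.cond_inter_preimage {P : Measure Ω} [IsProbabilityMeasure P]
    {X : Ω → 𝓧} {Y : Ω → 𝓨} (hX : Measurable X) (hY : Measurable Y) (hXY : IndepFun X Y P)
    {s : Set 𝓧} {t : Set 𝓨} (hs : MeasurableSet s) (ht : MeasurableSet t) :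
    IndepFun X Y (P[|X ⁻¹' s ∩ Y ⁻¹' t]) := by
  by_cases hA : P (X ⁻¹' s ∩ Y ⁻¹' t) = 0
  · rw [cond_eq_zero_of_meas_eq_zero hA, indepFun_iff_measure_inter_preimage_eq_mul]
    simp
  have := cond_isProbabilityMeasure hA
  refine indepFun_of_map_eq_prod (α := (P.map X)[|s]) (β := (P.map Y)[|t]) hX hY ?_
  rw [← mk_preimage_prod, map_cond_preimage P (hX.prodMk hY) (hs.prod ht),
    hXY.map_prod_eq_prod_map_map hX.aemeasurable hY.aemeasurable, cond_prod_eq_prod_cond]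

lemma condCov_eq_zero_of_indepFun_s0 {P : Measure Ω} {A : Set Ω} {X Y : Ω → ℝ}
    (hX : Measurable X) (hY : Measurable Y) (h : IndepFun X Y (P[|A])) :
    condCov P A X Y = 0 := by
  rw [condCov, ← h.integral_mul_eq_mul_integral hX.aestronglyMeasurable hY.aestronglyMeasurable]
  exact sub_self _

end Conditioning

section CondCov

variable {Ω : Type*} [MeasurableSpace Ω]

lemma integral_cond (P : Measure Ω) (A : Set Ω) (g : Ω → ℝ) :
    ∫ ω, g ω ∂(P[|A]) = (P.real A)⁻¹ * ∫ ω in A, g ω ∂P := by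
  rw [ProbabilityTheory.cond, integral_smul_measure, ENNReal.toReal_inv, smul_eq_mul,
    measureReal_def]

/-- Also valid when `P.real A = 0`, both sides then being `0` since `0⁻¹ = 0`. -/
lemma condCov_eq (P : Measure Ω) (A : Set Ω) (X Y : Ω → ℝ) :
    condCov P A X Y = (P.real A)⁻¹ ^ 2 *
      (P.real A * ∫ ω in A, X ω * Y ω ∂P - (∫ ω in A, X ω ∂P) * ∫ ω in A, Y ω ∂P) := by
  rw [condCov, integral_cond, integral_cond, integral_cond]
  rcases eq_or_ne (P.real A) 0 with h | h
  · simp [h]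
  · field_simp

lemma condCov_preimage {P : Measure Ω} {X Y : Ω → ℝ} (hX : Measurable X) (hY : Measurable Y)
    {S : Set (ℝ × ℝ)} (hS : MeasurableSet S) :
    condCov P ((fun ω => (X ω, Y ω)) ⁻¹' S) X Y
      = condCov (P.map fun ω => (X ω, Y ω)) S Prod.fst Prod.snd := by
  have hT : Measurable fun ω => (X ω, Y ω) := hX.prodMk hY
  simp only [condCov, ← map_cond_preimage P hT hS]
  rw [integral_map hT.aemeasurable (by fun_prop), integral_map hT.aemeasurable (by fun_prop),
    integral_map hT.aemeasurable (by fun_prop)]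

end CondCov

section Quantile

variable {Ω : Type*} [MeasurableSpace Ω] {P : Measure Ω} {X Y : Ω → ℝ}

lemma strictMono_cdf {ν : Measure ℝ} [IsProbabilityMeasure ν]
    (h : ∀ a b, a < b → ν (Ioo a b) ≠ 0) : StrictMono (cdf ν) := by
  intro x y hxy
  have hIoc : ν (Ioc x y) ≠ 0 := fun h0 => h x y hxy (measure_mono_null Ioo_subset_Ioc_self h0)
  rw [← measure_cdf ν, StieltjesFunction.measure_Ioc, ENNReal.ofReal_ne_zero_iff] at hIoc
  linarith

lemma cdfOf_eq_cdf_map [IsProbabilityMeasure P] (hX : Measurable X) :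
    cdfOf P X = cdf (P.map X) := by
  have := Measure.isProbabilityMeasure_map (μ := P) hX.aemeasurable
  ext x
  rw [cdf_eq_real, measureReal_def, Measure.map_apply hX measurableSet_Iic]
  rfl

lemma strictMono_cdfOf [IsProbabilityMeasure P] (hX : Measurable X)
    (h : ∀ a b, a < b → P (X ⁻¹' Ioo a b) ≠ 0) : StrictMono (cdfOf P X) := by
  rw [cdfOf_eq_cdf_map hX]
  have := Measure.isProbabilityMeasure_map (μ := P) hX.aemeasurable
  exact strictMono_cdf fun a b hab => by
    rw [Measure.map_apply hX measurableSet_Ioo]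
    exact h a b hab

lemma cdfOf_mem_Ioo [IsProbabilityMeasure P] (hX : Measurable X) (h : StrictMono (cdfOf P X))
    (x : ℝ) : cdfOf P X x ∈ Ioo 0 1 := by
  rw [cdfOf_eq_cdf_map hX] at h ⊢
  exact ⟨(cdf_nonneg _ (x - 1)).trans_lt (h (sub_one_lt x)),
    (h (lt_add_one x)).trans_le (cdf_le_one _ _)⟩

lemma quantileSet_eq_inter_preimage (p₁ q₁ p₂ q₂ : ℝ) :
    quantileSet P X Y p₁ q₁ p₂ q₂ = X ⁻¹' Icc (quantileOf P X p₁) (quantileOf P X q₁)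
      ∩ Y ⁻¹' Icc (quantileOf P Y p₂) (quantileOf P Y q₂) :=
  rfl

lemma quantileSet_cdfOf (hX : Function.Injective (cdfOf P X))
    (hY : Function.Injective (cdfOf P Y)) (a b c d : ℝ) :
    quantileSet P X Y (cdfOf P X a) (cdfOf P X b) (cdfOf P Y c) (cdfOf P Y d)
      = (fun ω => (X ω, Y ω)) ⁻¹' (Icc a b ×ˢ Icc c d) := by
  rw [quantileSet_eq_inter_preimage, mk_preimage_prod, quantileOf,
    Function.leftInverse_invFun hX, Function.leftInverse_invFun hX, quantileOf,
    Function.leftInverse_invFun hY, Function.leftInverse_invFun hY]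

end Quantile

section LawWithDensity

variable {Ω : Type*} [MeasurableSpace Ω] {P : Measure Ω} {X Y : Ω → ℝ} {f : ℝ × ℝ → ℝ}

lemma absolutelyContinuous_withDensity_ofReal {α : Type*} [MeasurableSpace α]
    {μ : Measure α} {g : α → ℝ} (hg : Measurable g) (hg_pos : ∀ x, 0 < g x) :
    μ ≪ μ.withDensity fun x => ENNReal.ofReal (g x) :=
  withDensity_absolutelyContinuous' (by fun_prop) (ae_of_all _ fun x => by simpa using hg_pos x)

lemma setIntegral_Icc_prod_withDensity {g : ℝ × ℝ → ℝ} (hf : Continuous f) (hf_nonneg : 0 ≤ f)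
    (hg : Continuous g) {a b c d : ℝ} (hab : a ≤ b) (hcd : c ≤ d) :
    ∫ z in Icc a b ×ˢ Icc c d, g z ∂(volume.withDensity fun z => ENNReal.ofReal (f z))
      = ∫ x in a..b, ∫ y in c..d, g (x, y) * f (x, y) := by
  have hS : MeasurableSet (Icc a b ×ˢ Icc c d) := measurableSet_Icc.prod measurableSet_Icc
  rw [setIntegral_withDensity_eq_setIntegral_toReal_smul (by fun_prop)
    (ae_of_all _ fun _ => ENNReal.ofReal_lt_top) _ hS]
  simp_rw [ENNReal.toReal_ofReal (hf_nonneg _), smul_eq_mul]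
  have hint : IntegrableOn (fun z => f z * g z) (Icc a b ×ˢ Icc c d) (volume.prod volume) :=
    (hf.fun_mul hg).continuousOn.integrableOn_compact (isCompact_Icc.prod isCompact_Icc)
  rw [Measure.volume_eq_prod, setIntegral_prod _ hint, intervalIntegral.integral_of_le hab,
    ← integral_Icc_eq_integral_Ioc]
  refine setIntegral_congr_fun measurableSet_Icc fun x _ => ?_
  simp only [intervalIntegral.integral_of_le hcd, ← integral_Icc_eq_integral_Ioc, mul_comm]

lemma measure_preimage_prod_ne_zero (hX : Measurable X) (hY : Measurable Y) (hf : Measurable f)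
    (hf_pos : ∀ z, 0 < f z)
    (hf_law : P.map (fun ω => (X ω, Y ω)) = volume.withDensity fun z => ENNReal.ofReal (f z))
    {s t : Set ℝ} (hs : MeasurableSet s) (ht : MeasurableSet t) (hs0 : volume s ≠ 0)
    (ht0 : volume t ≠ 0) :
    P ((fun ω => (X ω, Y ω)) ⁻¹' (s ×ˢ t)) ≠ 0 := by
  rw [← Measure.map_apply (hX.prodMk hY) (hs.prod ht), hf_law]
  refine mt (fun h0 => absolutelyContinuous_withDensity_ofReal hf hf_pos h0) ?_
  rw [Measure.volume_eq_prod, Measure.prod_prod]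
  exact mul_ne_zero hs0 ht0

lemma strictMono_cdfOf_of_density [IsProbabilityMeasure P] (hX : Measurable X)
    (hY : Measurable Y) (hf : Measurable f) (hf_pos : ∀ z, 0 < f z)
    (hf_law : P.map (fun ω => (X ω, Y ω)) = volume.withDensity fun z => ENNReal.ofReal (f z)) :
    StrictMono (cdfOf P X) ∧ StrictMono (cdfOf P Y) := by
  constructor
  · refine strictMono_cdfOf hX fun a b hab => ?_
    simpa [mk_preimage_prod] using measure_preimage_prod_ne_zero hX hY hf hf_pos hf_law
      measurableSet_Ioo MeasurableSet.univ (by simpa using hab) (by simp)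
  · refine strictMono_cdfOf hY fun a b hab => ?_
    simpa [mk_preimage_prod] using measure_preimage_prod_ne_zero hX hY hf hf_pos hf_law
      MeasurableSet.univ measurableSet_Ioo (by simp) (by simpa using hab)

lemma rectangle_moment_eq_of_condCov_eq_zero [IsProbabilityMeasure P] (hX : Measurable X)
    (hY : Measurable Y) (hf : Continuous f) (hf_pos : ∀ z, 0 < f z)
    (hf_law : P.map (fun ω => (X ω, Y ω)) = volume.withDensity fun z => ENNReal.ofReal (f z))
    {a b c d : ℝ} (hab : a < b) (hcd : c < d)
    (h : condCov P ((fun ω => (X ω, Y ω)) ⁻¹' (Icc a b ×ˢ Icc c d)) X Y = 0) :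
    (∫ x in a..b, ∫ y in c..d, x * y * f (x, y)) * (∫ x in a..b, ∫ y in c..d, f (x, y))
      = (∫ x in a..b, ∫ y in c..d, x * f (x, y)) * (∫ x in a..b, ∫ y in c..d, y * f (x, y)) := by
  have hS : MeasurableSet (Icc a b ×ˢ Icc c d) := measurableSet_Icc.prod measurableSet_Icc
  have hPS := measure_preimage_prod_ne_zero hX hY hf.measurable hf_pos hf_law measurableSet_Icc
    measurableSet_Icc (by simpa using hab) (by simpa using hcd)
  rw [← Measure.map_apply (hX.prodMk hY) hS, hf_law] at hPS
  have hf_nonneg : 0 ≤ f := fun z => (hf_pos z).le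
  have hmass : (volume.withDensity fun z => ENNReal.ofReal (f z)).real (Icc a b ×ˢ Icc c d)
      = ∫ x in a..b, ∫ y in c..d, f (x, y) := by
    simpa using setIntegral_Icc_prod_withDensity hf hf_nonneg continuous_const hab.le hcd.le
      (g := fun _ => (1 : ℝ))
  rw [condCov_preimage hX hY hS, hf_law, condCov_eq, hmass,
    setIntegral_Icc_prod_withDensity hf hf_nonneg (by fun_prop) hab.le hcd.le,
    setIntegral_Icc_prod_withDensity hf hf_nonneg (by fun_prop) hab.le hcd.le,
    setIntegral_Icc_prod_withDensity hf hf_nonneg (by fun_prop) hab.le hcd.le, mul_eq_zero,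
    sub_eq_zero] at h
  have hmass_ne : ∫ x in a..b, ∫ y in c..d, f (x, y) ≠ 0 := by
    rw [← hmass]
    exact (ENNReal.toReal_pos hPS (by rw [← hf_law]; exact measure_ne_top _ _)).ne'
  rw [mul_comm]
  simpa only using h.resolve_left (by simpa using hmass_ne)

lemma indepFun_of_density_mul_eq_mul [IsProbabilityMeasure P] (hX : Measurable X)
    (hY : Measurable Y) (hf : Measurable f) (hf_pos : ∀ z, 0 < f z)
    (hf_law : P.map (fun ω => (X ω, Y ω)) = volume.withDensity fun z => ENNReal.ofReal (f z))
    (hf_rank : ∀ a b c d, f (a, c) * f (b, d) = f (a, d) * f (b, c)) :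
    IndepFun X Y P := by
  have hsplit (z : ℝ × ℝ) : ENNReal.ofReal (f z)
      = ENNReal.ofReal (f (z.1, 0)) * ENNReal.ofReal (f (0, z.2) / f (0, 0)) := by
    rw [← ENNReal.ofReal_mul (hf_pos _).le, mul_div_assoc']
    congr 1
    rw [eq_div_iff (hf_pos _).ne', hf_rank z.1 0 0 z.2]
  refine indepFun_of_map_eq_prod hX hY
    (α := volume.withDensity fun x => ENNReal.ofReal (f (x, 0)))
    (β := volume.withDensity fun y => ENNReal.ofReal (f (0, y) / f (0, 0))) ?_
  rw [hf_law, prod_withDensity (by fun_prop) (by fun_prop), ← Measure.volume_eq_prod]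
  exact congrArg _ (funext hsplit)

end LawWithDensity

/-- **Main theorem (Theorem 3.1).** If the random vector `(X,Y)` has a jointly continuous,
strictly positive density `f` on `ℝ²`, then `X` and `Y` are independent if and only if they are
conditionally uncorrelated on every quantile set. -/
theorem independence_iff_condCov_eq_zero_on_quantile_sets
    {Ω : Type*} [MeasurableSpace Ω] (P : Measure Ω) [IsProbabilityMeasure P]
    (X Y : Ω → ℝ) (hX : Measurable X) (hY : Measurable Y)
    (f : ℝ × ℝ → ℝ) (hf_cont : Continuous f) (hf_pos : ∀ p, 0 < f p)
    (hf_law : Measure.map (fun ω => (X ω, Y ω)) P =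
      (volume : Measure (ℝ × ℝ)).withDensity (fun p => ENNReal.ofReal (f p))) :
    IndepFun X Y P ↔
      ∀ p₁ q₁ p₂ q₂ : ℝ, 0 < p₁ → p₁ < q₁ → q₁ < 1 → 0 < p₂ → p₂ < q₂ → q₂ < 1 →
        condCov P (quantileSet P X Y p₁ q₁ p₂ q₂) X Y = 0 := by
  constructor
  · intro hXY p₁ q₁ p₂ q₂ _ _ _ _ _ _
    rw [quantileSet_eq_inter_preimage]
    exact condCov_eq_zero_of_indepFun_s0 hX hY
      (hXY.cond_inter_preimage hX hY measurableSet_Icc measurableSet_Icc)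
  · intro h
    obtain ⟨hXmono, hYmono⟩ :=
      strictMono_cdfOf_of_density hX hY hf_cont.measurable hf_pos hf_law
    refine indepFun_of_density_mul_eq_mul hX hY hf_cont.measurable hf_pos hf_law
      (mul_eq_mul_of_rectangle_moment_eq hf_cont fun a b c d hab hcd => ?_)
    have hA := h _ _ _ _ (cdfOf_mem_Ioo hX hXmono a).1 (hXmono hab)
      (cdfOf_mem_Ioo hX hXmono b).2 (cdfOf_mem_Ioo hY hYmono c).1 (hYmono hcd)
      (cdfOf_mem_Ioo hY hYmono d).2
    rw [quantileSet_cdfOf hXmono.injective hYmono.injective] at hA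
    exact rectangle_moment_eq_of_condCov_eq_zero hX hY hf_cont hf_pos hf_law hab hcd hA
end

section
/- Let X and Y be real-valued random variables that are independent, and let A = {X ∈ I} ∩ {Y ∈ J}, where I and J are bounded closed intervals with P(A) > 0. Then the conditional covariance Cov_A[X,Y] equals 0. -/
open MeasureTheory ProbabilityTheory Set

/-! Conditioning on the product event `{X ∈ s} ∩ {Y ∈ t}` keeps `X` and `Y` independent: the
conditioned probability of `{X ∈ u} ∩ {Y ∈ v}` is
`μ(X ∈ s ∩ u) μ(Y ∈ t ∩ v) / (μ(X ∈ s) μ(Y ∈ t))`, which factors. The conditional covariance is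
then a covariance of independent real variables, hence `0`; no integrability is needed, since
`IndepFun.integral_mul_eq_mul_integral` also holds when the integrals take Mathlib's junk value. -/

namespace ProbabilityTheory

variable {Ω β γ : Type*} {mΩ : MeasurableSpace Ω} {mβ : MeasurableSpace β}
  {mγ : MeasurableSpace γ} {μ : Measure Ω} {X : Ω → β} {Y : Ω → γ}

lemma IndepFun.cond_preimage_inter_preimage (hXY : X ⟂ᵢ[μ] Y) (hX : Measurable X)
    (hY : Measurable Y) {s : Set β} {t : Set γ} (hs : MeasurableSet s) (ht : MeasurableSet t) :
    IndepFun X Y (μ[|X ⁻¹' s ∩ Y ⁻¹' t]) := by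
  by_cases hzero : μ[|X ⁻¹' s ∩ Y ⁻¹' t] = 0
  · rw [hzero, indepFun_iff_measure_inter_preimage_eq_mul]
    simp
  obtain ⟨hA_top, hA_zero⟩ := not_or.mp (cond_eq_zero.not.mp hzero)
  rw [indepFun_iff_measure_inter_preimage_eq_mul] at hXY ⊢
  intro u v hu hv
  have hA : MeasurableSet (X ⁻¹' s ∩ Y ⁻¹' t) := (hX hs).inter (hY ht)
  have hXu : X ⁻¹' s ∩ Y ⁻¹' t ∩ X ⁻¹' u = X ⁻¹' (s ∩ u) ∩ Y ⁻¹' t := by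
    ext; simp only [mem_inter_iff, mem_preimage]; tauto
  have hYv : X ⁻¹' s ∩ Y ⁻¹' t ∩ Y ⁻¹' v = X ⁻¹' s ∩ Y ⁻¹' (t ∩ v) := by
    ext; simp only [mem_inter_iff, mem_preimage]; tauto
  have hXuYv : X ⁻¹' s ∩ Y ⁻¹' t ∩ (X ⁻¹' u ∩ Y ⁻¹' v) = X ⁻¹' (s ∩ u) ∩ Y ⁻¹' (t ∩ v) := by
    ext; simp only [mem_inter_iff, mem_preimage]; tauto
  rw [cond_apply hA, cond_apply hA, cond_apply hA, hXu, hYv, hXuYv,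
    hXY _ _ (hs.inter hu) (ht.inter hv), hXY _ _ (hs.inter hu) ht, hXY _ _ hs (ht.inter hv)]
  have hA_prod := hXY s t hs ht
  set m := μ (X ⁻¹' s ∩ Y ⁻¹' t)
  calc m⁻¹ * (μ (X ⁻¹' (s ∩ u)) * μ (Y ⁻¹' (t ∩ v)))
      = m⁻¹ * (μ (X ⁻¹' (s ∩ u)) * μ (Y ⁻¹' (t ∩ v))) * (m⁻¹ * m) := by
        rw [ENNReal.inv_mul_cancel hA_zero hA_top, mul_one]
    _ = _ := by rw [hA_prod]; ring

end ProbabilityTheory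

theorem condCov_eq_zero_of_indepFun_general
    {Ω : Type*} [MeasurableSpace Ω] (P : Measure Ω)
    (X Y : Ω → ℝ) (hX : Measurable X) (hY : Measurable Y)
    (hindep : IndepFun X Y P)
    (a b c d : ℝ) (A : Set Ω)
    (hA : A = X ⁻¹' (Set.Icc a b) ∩ Y ⁻¹' (Set.Icc c d)) :
    condCov P A X Y = 0 := by
  subst hA
  have hindep_A := hindep.cond_preimage_inter_preimage hX hY (s := Icc a b) (t := Icc c d)
    measurableSet_Icc measurableSet_Icc
  rw [condCov, ← Pi.mul_def,
    hindep_A.integral_mul_eq_mul_integral hX.aestronglyMeasurable hY.aestronglyMeasurable, sub_self]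

/-- The easy direction of the main theorem: if `X` and `Y` are independent, then they are
conditionally uncorrelated on every product set `A = {X ∈ I} ∩ {Y ∈ J}` of bounded closed
intervals with `P(A) > 0`. -/
theorem condCov_eq_zero_of_indepFun
    {Ω : Type*} [MeasurableSpace Ω] (P : Measure Ω) [IsProbabilityMeasure P]
    (X Y : Ω → ℝ) (hX : Measurable X) (hY : Measurable Y)
    (hindep : IndepFun X Y P)
    (a b c d : ℝ) (A : Set Ω)
    (hA : A = X ⁻¹' (Set.Icc a b) ∩ Y ⁻¹' (Set.Icc c d))
    (hPA : 0 < P A) :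
    condCov P A X Y = 0 :=
  condCov_eq_zero_of_indepFun_general P X Y hX hY hindep a b c d A hA
end

section
/- Let H : (0,1)⁴ → ℝ be a continuous function that is symmetric under the swap (u₁,v₁,u₂,v₂) ↦ (u₂,v₁,u₁,v₂) and under the swap (u₁,v₁,u₂,v₂) ↦ (u₁,v₂,u₂,v₁). Suppose that for all 0 < p₁ < q₁ < 1 and 0 < p₂ < q₂ < 1 one has ∫_{p₁}^{q₁} ∫_{p₂}^{q₂} ∫_{p₁}^{q₁} ∫_{p₂}^{q₂} H(u₁,v₁,u₂,v₂) dv₂ du₂ dv₁ du₁ = 0. Then H is identically zero on (0,1)⁴. -/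
open MeasureTheory Set Filter Topology intervalIntegral

/-!
Write `J(I₁, I₂, I₃, I₄)` for the iterated integral of `H` over the box `I₁ × I₂ × I₃ × I₄`.
It is additive in each interval, and by Fubini the two symmetries of `H` make it symmetric under
`I₁ ↔ I₃` and under `I₂ ↔ I₄`. The hypothesis says `J(I, K, I, K) = 0`; polarizing first in the
`u`-intervals and then in the `v`-intervals gives `J = 0` on every box, and differentiating in the
four variables in turn gives `H = 0`. To work with a globally continuous function, `H` is first
clamped to a cube `[ε, 1 - ε]⁴` around the given point.
-/

theorem intervalIntegral_intervalIntegral_swap_of_continuous {F : ℝ → ℝ → ℝ} (hF : Continuous ↿F)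
    (a b c d : ℝ) :
    ∫ x in a..b, ∫ y in c..d, F x y = ∫ y in c..d, ∫ x in a..b, F x y :=
  intervalIntegral_intervalIntegral_swap <|
    (hF.continuousOn.integrableOn_compact (isCompact_uIcc.prod isCompact_uIcc)).mono_set
      (prod_mono uIoc_subset_uIcc uIoc_subset_uIcc)

theorem intervalIntegral_reverse₃_of_continuous {F : ℝ → ℝ → ℝ → ℝ} (hF : Continuous ↿F)
    (a b c d e f : ℝ) :
    ∫ x in a..b, ∫ y in c..d, ∫ z in e..f, F x y z
      = ∫ z in e..f, ∫ y in c..d, ∫ x in a..b, F x y z := by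
  calc ∫ x in a..b, ∫ y in c..d, ∫ z in e..f, F x y z
      = ∫ x in a..b, ∫ z in e..f, ∫ y in c..d, F x y z := by
        refine integral_congr fun x _ => ?_
        exact intervalIntegral_intervalIntegral_swap_of_continuous (F := F x) (by fun_prop) c d e f
    _ = ∫ z in e..f, ∫ x in a..b, ∫ y in c..d, F x y z :=
        intervalIntegral_intervalIntegral_swap_of_continuous (F := fun x z => ∫ y in c..d, F x y z)
          (by fun_prop) a b e f
    _ = ∫ z in e..f, ∫ y in c..d, ∫ x in a..b, F x y z := by
        refine integral_congr fun z _ => ?_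
        exact intervalIntegral_intervalIntegral_swap_of_continuous (F := fun x y => F x y z)
          (by fun_prop) a b c d

theorem eq_zero_of_forall_intervalIntegral_eq_zero {f : ℝ → ℝ} (hf : Continuous f) {S : Set ℝ}
    {x : ℝ} (hx : x ∈ interior S) (h : ∀ a ∈ S, ∀ b ∈ S, ∫ t in a..b, f t = 0) : f x = 0 := by
  have hS : S ∈ 𝓝 x := mem_interior_iff_mem_nhds.1 hx
  have hprim : (fun b => ∫ t in x..b, f t) =ᶠ[𝓝 x] fun _ => 0 := by
    filter_upwards [hS] with b hb using h x (mem_of_mem_nhds hS) b hb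
  exact (hf.integral_hasStrictDerivAt x x).hasDerivAt.unique
    ((hasDerivAt_const x 0).congr_of_eventuallyEq hprim)

theorem eq_zero_of_biadditive_of_diag_eq_zero {T : ℝ → ℝ → ℝ → ℝ → ℝ} {S : Set ℝ}
    (hadd₁ : ∀ p m q r s, T p m r s + T m q r s = T p q r s)
    (hadd₂ : ∀ p q r m s, T p q r m + T p q m s = T p q r s)
    (hsymm : ∀ p q r s, T r s p q = T p q r s)
    (hdiag : ∀ p ∈ S, ∀ q ∈ S, T p q p q = 0) :
    ∀ p ∈ S, ∀ q ∈ S, ∀ r ∈ S, ∀ s ∈ S, T p q r s = 0 := by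
  intro p hp q hq r hr s hs
  -- expanding `T x y x y = 0` around the base point `p` gives `T p x p y + T p y p x = 0`
  have hbase : ∀ x ∈ S, ∀ y ∈ S, T p x p y = 0 := by
    intro x hx y hy
    linarith [hadd₁ p x y x y, hadd₂ p x p x y, hadd₂ p y p x y, hsymm p x p y,
      hdiag x hx y hy, hdiag p hp x hx, hdiag p hp y hy]
  linarith [hadd₂ p q p r s, hbase q hq r hr, hbase q hq s hs]

noncomputable def iteratedIntegral (G : ℝ → ℝ → ℝ → ℝ → ℝ) (a b c d e f g h : ℝ) : ℝ :=
  ∫ x in a..b, ∫ y in c..d, ∫ z in e..f, ∫ w in g..h, G x y z w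

namespace iteratedIntegral

variable {G : ℝ → ℝ → ℝ → ℝ → ℝ}

theorem congr {G' : ℝ → ℝ → ℝ → ℝ → ℝ} {a b c d e f g h : ℝ}
    (hGG' : ∀ x ∈ uIcc a b, ∀ y ∈ uIcc c d, ∀ z ∈ uIcc e f, ∀ w ∈ uIcc g h,
      G x y z w = G' x y z w) :
    iteratedIntegral G a b c d e f g h = iteratedIntegral G' a b c d e f g h :=
  integral_congr fun x hx => integral_congr fun y hy => integral_congr fun z hz =>
    integral_congr fun w hw => hGG' x hx y hy z hz w hw

theorem diag_swap₁ (p q c d : ℝ) :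
    iteratedIntegral G q p c d q p c d = iteratedIntegral G p q c d p q c d := by
  simp only [iteratedIntegral, integral_symm p q, intervalIntegral.integral_neg, neg_neg]

theorem diag_swap₂ (p q c d : ℝ) :
    iteratedIntegral G p q d c p q d c = iteratedIntegral G p q c d p q c d := by
  simp only [iteratedIntegral, integral_symm c d, intervalIntegral.integral_neg, neg_neg]

theorem diag_eq_zero_of_lt {S : Set ℝ}
    (h : ∀ p ∈ S, ∀ q ∈ S, ∀ c ∈ S, ∀ d ∈ S, p < q → c < d →
      iteratedIntegral G p q c d p q c d = 0) :
    ∀ p ∈ S, ∀ q ∈ S, ∀ c ∈ S, ∀ d ∈ S, iteratedIntegral G p q c d p q c d = 0 := by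
  have h' : ∀ p ∈ S, ∀ q ∈ S, ∀ c ∈ S, ∀ d ∈ S, p < q →
      iteratedIntegral G p q c d p q c d = 0 := by
    intro p hp q hq c hc d hd hpq
    rcases lt_trichotomy c d with hcd | rfl | hdc
    · exact h p hp q hq c hc d hd hpq hcd
    · simp [iteratedIntegral]
    · rw [← diag_swap₂]
      exact h p hp q hq d hd c hc hpq hdc
  intro p hp q hq c hc d hd
  rcases lt_trichotomy p q with hpq | rfl | hqp
  · exact h' p hp q hq c hc d hd hpq
  · simp [iteratedIntegral]
  · rw [← diag_swap₁]
    exact h' q hq p hp c hc d hd hqp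

variable (hG : Continuous ↿G)
include hG

theorem comm₁₂ (a b c d e f g h : ℝ) :
    iteratedIntegral G a b c d e f g h
      = iteratedIntegral (fun y x z w => G x y z w) c d a b e f g h :=
  intervalIntegral_intervalIntegral_swap_of_continuous
    (F := fun x y => ∫ z in e..f, ∫ w in g..h, G x y z w)
    (by fun_prop) a b c d

theorem reverse₁₂₃ (a b c d e f g h : ℝ) :
    iteratedIntegral G a b c d e f g h
      = iteratedIntegral (fun z y x w => G x y z w) e f c d a b g h :=
  intervalIntegral_reverse₃_of_continuous (F := fun x y z => ∫ w in g..h, G x y z w)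
    (by fun_prop) a b c d e f

theorem reverse₂₃₄ (a b c d e f g h : ℝ) :
    iteratedIntegral G a b c d e f g h
      = iteratedIntegral (fun x w z y => G x y z w) a b g h e f c d := by
  refine integral_congr fun x _ => ?_
  exact intervalIntegral_reverse₃_of_continuous (F := G x) (by fun_prop) c d e f g h

theorem add_adjacent₁ (a m b c d e f g h : ℝ) :
    iteratedIntegral G a m c d e f g h + iteratedIntegral G m b c d e f g h
      = iteratedIntegral G a b c d e f g h :=
  integral_add_adjacent_intervals (Continuous.intervalIntegrable (by fun_prop) _ _)
    (Continuous.intervalIntegrable (by fun_prop) _ _)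

theorem add_adjacent₂ (a b c m d e f g h : ℝ) :
    iteratedIntegral G a b c m e f g h + iteratedIntegral G a b m d e f g h
      = iteratedIntegral G a b c d e f g h := by
  simp only [comm₁₂ hG a b]
  exact add_adjacent₁ (by fun_prop) _ _ _ _ _ _ _ _ _

theorem add_adjacent₃ (a b c d e m f g h : ℝ) :
    iteratedIntegral G a b c d e m g h + iteratedIntegral G a b c d m f g h
      = iteratedIntegral G a b c d e f g h := by
  simp only [reverse₁₂₃ hG a b]
  exact add_adjacent₁ (by fun_prop) _ _ _ _ _ _ _ _ _

theorem add_adjacent₄ (a b c d e f g m h : ℝ) :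
    iteratedIntegral G a b c d e f g m + iteratedIntegral G a b c d e f m h
      = iteratedIntegral G a b c d e f g h := by
  simp only [reverse₂₃₄ hG a b c d]
  exact add_adjacent₂ (by fun_prop) _ _ _ _ _ _ _ _ _

theorem swap₁₃ (hsym : ∀ x y z w, G z y x w = G x y z w) (a b c d e f g h : ℝ) :
    iteratedIntegral G e f c d a b g h = iteratedIntegral G a b c d e f g h := by
  rw [reverse₁₂₃ hG a b]
  simp only [hsym]

theorem swap₂₄ (hsym : ∀ x y z w, G x w z y = G x y z w) (a b c d e f g h : ℝ) :
    iteratedIntegral G a b g h e f c d = iteratedIntegral G a b c d e f g h := by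
  rw [reverse₂₃₄ hG a b c d]
  simp only [hsym]

theorem eq_zero_of_diag_eq_zero (hsym₁ : ∀ x y z w, G z y x w = G x y z w)
    (hsym₂ : ∀ x y z w, G x w z y = G x y z w) {S : Set ℝ}
    (hdiag : ∀ p ∈ S, ∀ q ∈ S, ∀ c ∈ S, ∀ d ∈ S, iteratedIntegral G p q c d p q c d = 0) :
    ∀ p ∈ S, ∀ q ∈ S, ∀ c ∈ S, ∀ d ∈ S, ∀ r ∈ S, ∀ s ∈ S, ∀ g ∈ S, ∀ h ∈ S,
      iteratedIntegral G p q c d r s g h = 0 := by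
  have hcd : ∀ c ∈ S, ∀ d ∈ S, ∀ p ∈ S, ∀ q ∈ S, ∀ r ∈ S, ∀ s ∈ S,
      iteratedIntegral G p q c d r s c d = 0 := fun c hc d hd =>
    eq_zero_of_biadditive_of_diag_eq_zero
      (T := fun p q r s => iteratedIntegral G p q c d r s c d)
      (fun _ _ _ _ _ => add_adjacent₁ hG ..) (fun _ _ _ _ _ => add_adjacent₃ hG ..)
      (fun _ _ _ _ => swap₁₃ hG hsym₁ ..) (fun p hp q hq => hdiag p hp q hq c hc d hd)
  intro p hp q hq c hc d hd r hr s hs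
  exact eq_zero_of_biadditive_of_diag_eq_zero
    (T := fun c d g h => iteratedIntegral G p q c d r s g h)
    (fun _ _ _ _ _ => add_adjacent₂ hG ..) (fun _ _ _ _ _ => add_adjacent₄ hG ..)
    (fun _ _ _ _ => swap₂₄ hG hsym₂ ..) (fun c hc d hd => hcd c hc d hd p hp q hq r hr s hs)
    c hc d hd

end iteratedIntegral

theorem eq_zero_of_forall_iteratedIntegral_eq_zero {G : ℝ → ℝ → ℝ → ℝ → ℝ}
    (hG : Continuous ↿G) {S : Set ℝ}
    (hbox : ∀ p ∈ S, ∀ q ∈ S, ∀ c ∈ S, ∀ d ∈ S, ∀ r ∈ S, ∀ s ∈ S, ∀ g ∈ S, ∀ h ∈ S,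
      iteratedIntegral G p q c d r s g h = 0) :
    ∀ x ∈ interior S, ∀ y ∈ interior S, ∀ z ∈ interior S, ∀ w ∈ interior S, G x y z w = 0 := by
  intro x hx y hy z hz w hw
  have h₁ : ∀ c ∈ S, ∀ d ∈ S, ∀ e ∈ S, ∀ f ∈ S, ∀ g ∈ S, ∀ h ∈ S,
      ∫ y in c..d, ∫ z in e..f, ∫ w in g..h, G x y z w = 0 := fun c hc d hd e he f hf g hg h hh =>
    eq_zero_of_forall_intervalIntegral_eq_zero
      (f := fun x => ∫ y in c..d, ∫ z in e..f, ∫ w in g..h, G x y z w) (by fun_prop) hx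
      fun a ha b hb => hbox a ha b hb c hc d hd e he f hf g hg h hh
  have h₂ : ∀ e ∈ S, ∀ f ∈ S, ∀ g ∈ S, ∀ h ∈ S, ∫ z in e..f, ∫ w in g..h, G x y z w = 0 :=
    fun e he f hf g hg h hh => eq_zero_of_forall_intervalIntegral_eq_zero
      (f := fun y => ∫ z in e..f, ∫ w in g..h, G x y z w) (by fun_prop) hy
      fun c hc d hd => h₁ c hc d hd e he f hf g hg h hh
  have h₃ : ∀ g ∈ S, ∀ h ∈ S, ∫ w in g..h, G x y z w = 0 :=
    fun g hg h hh => eq_zero_of_forall_intervalIntegral_eq_zero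
      (f := fun z => ∫ w in g..h, G x y z w) (by fun_prop) hz
      fun e he f hf => h₂ e he f hf g hg h hh
  exact eq_zero_of_forall_intervalIntegral_eq_zero (f := G x y z) (by fun_prop) hw h₃

theorem eq_zero_of_forall_iteratedIntegral_diag_eq_zero {G : ℝ → ℝ → ℝ → ℝ → ℝ}
    (hG : Continuous ↿G)
    (hsym₁ : ∀ x y z w, G z y x w = G x y z w) (hsym₂ : ∀ x y z w, G x w z y = G x y z w)
    {S : Set ℝ} (hdiag : ∀ p ∈ S, ∀ q ∈ S, ∀ c ∈ S, ∀ d ∈ S, p < q → c < d →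
      iteratedIntegral G p q c d p q c d = 0) :
    ∀ x ∈ interior S, ∀ y ∈ interior S, ∀ z ∈ interior S, ∀ w ∈ interior S, G x y z w = 0 :=
  eq_zero_of_forall_iteratedIntegral_eq_zero hG <|
    iteratedIntegral.eq_zero_of_diag_eq_zero hG hsym₁ hsym₂ <|
      iteratedIntegral.diag_eq_zero_of_lt hdiag

theorem eventually_mem_Ioo_one_sub {x : ℝ} (hx : x ∈ Ioo (0 : ℝ) 1) :
    ∀ᶠ ε in 𝓝[>] (0 : ℝ), x ∈ Ioo ε (1 - ε) := by
  have h₁ : ∀ᶠ ε in 𝓝 (0 : ℝ), ε < x := eventually_lt_nhds hx.1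
  have h₂ : ∀ᶠ ε in 𝓝 (0 : ℝ), ε < 1 - x := eventually_lt_nhds (sub_pos.2 hx.2)
  filter_upwards [nhdsWithin_le_nhds (h₁.and h₂)] with ε ⟨h₁, h₂⟩ using ⟨h₁, by linarith⟩

theorem eq_zero_of_forall_iteratedIntegral_diag_eq_zero_of_continuousOn
    {H : ℝ → ℝ → ℝ → ℝ → ℝ} {U : Set ℝ} (hH : ContinuousOn ↿H (U ×ˢ U ×ˢ U ×ˢ U))
    (hsym₁ : ∀ x ∈ U, ∀ y ∈ U, ∀ z ∈ U, ∀ w ∈ U, H z y x w = H x y z w)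
    (hsym₂ : ∀ x ∈ U, ∀ y ∈ U, ∀ z ∈ U, ∀ w ∈ U, H x w z y = H x y z w)
    {a b : ℝ} (hab : a ≤ b) (hU : Icc a b ⊆ U)
    (hdiag : ∀ p ∈ Icc a b, ∀ q ∈ Icc a b, ∀ c ∈ Icc a b, ∀ d ∈ Icc a b, p < q → c < d →
      iteratedIntegral H p q c d p q c d = 0) :
    ∀ x ∈ Ioo a b, ∀ y ∈ Ioo a b, ∀ z ∈ Ioo a b, ∀ w ∈ Ioo a b, H x y z w = 0 := by
  -- clamping to `[a, b]` makes `H` continuous on all of `ℝ⁴` without changing it on `[a, b]⁴`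
  let π : ℝ → ℝ := fun t => projIcc a b hab t
  have hπ : ∀ t, π t ∈ U := fun t => hU (projIcc a b hab t).2
  let G : ℝ → ℝ → ℝ → ℝ → ℝ := fun x y z w => H (π x) (π y) (π z) (π w)
  have hG : Continuous ↿G :=
    hH.comp_continuous (f := fun z : ℝ × ℝ × ℝ × ℝ => (π z.1, π z.2.1, π z.2.2.1, π z.2.2.2))
      (by fun_prop) fun _ => ⟨hπ _, hπ _, hπ _, hπ _⟩
  have hGH : ∀ x ∈ Icc a b, ∀ y ∈ Icc a b, ∀ z ∈ Icc a b, ∀ w ∈ Icc a b,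
      G x y z w = H x y z w := by
    intro x hx y hy z hz w hw
    simp only [G, π, projIcc_of_mem hab hx, projIcc_of_mem hab hy, projIcc_of_mem hab hz,
      projIcc_of_mem hab hw]
  have hGdiag : ∀ p ∈ Icc a b, ∀ q ∈ Icc a b, ∀ c ∈ Icc a b, ∀ d ∈ Icc a b, p < q → c < d →
      iteratedIntegral G p q c d p q c d = 0 := by
    intro p hp q hq c hc d hd hpq hcd
    rw [iteratedIntegral.congr fun x hx y hy z hz w hw => hGH x (uIcc_subset_Icc hp hq hx)
      y (uIcc_subset_Icc hc hd hy) z (uIcc_subset_Icc hp hq hz) w (uIcc_subset_Icc hc hd hw)]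
    exact hdiag p hp q hq c hc d hd hpq hcd
  have hG₀ := eq_zero_of_forall_iteratedIntegral_diag_eq_zero hG
    (fun _ _ _ _ => hsym₁ _ (hπ _) _ (hπ _) _ (hπ _) _ (hπ _))
    (fun _ _ _ _ => hsym₂ _ (hπ _) _ (hπ _) _ (hπ _) _ (hπ _)) hGdiag
  rw [interior_Icc] at hG₀
  intro x hx y hy z hz w hw
  rw [← hGH x (Ioo_subset_Icc_self hx) y (Ioo_subset_Icc_self hy) z (Ioo_subset_Icc_self hz)
    w (Ioo_subset_Icc_self hw)]
  exact hG₀ x hx y hy z hz w hw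

/-- The analytic core of the main theorem: if `H` is continuous on `(0,1)⁴`, symmetric under
the swaps `(u₁,v₁,u₂,v₂) ↦ (u₂,v₁,u₁,v₂)` and `(u₁,v₁,u₂,v₂) ↦ (u₁,v₂,u₂,v₁)`, and all its
iterated integrals over boxes `[p₁,q₁] × [p₂,q₂] × [p₁,q₁] × [p₂,q₂]` vanish, then `H` is
identically zero on `(0,1)⁴`. -/
theorem eq_zero_of_boxes_integral_eq_zero
    (H : ℝ → ℝ → ℝ → ℝ → ℝ)
    (hcont : ContinuousOn (fun z : ℝ × ℝ × ℝ × ℝ => H z.1 z.2.1 z.2.2.1 z.2.2.2)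
      (Ioo (0 : ℝ) 1 ×ˢ Ioo (0 : ℝ) 1 ×ˢ Ioo (0 : ℝ) 1 ×ˢ Ioo (0 : ℝ) 1))
    (hsym1 : ∀ u₁ v₁ u₂ v₂ : ℝ, u₁ ∈ Ioo (0 : ℝ) 1 → v₁ ∈ Ioo (0 : ℝ) 1 →
      u₂ ∈ Ioo (0 : ℝ) 1 → v₂ ∈ Ioo (0 : ℝ) 1 → H u₂ v₁ u₁ v₂ = H u₁ v₁ u₂ v₂)
    (hsym2 : ∀ u₁ v₁ u₂ v₂ : ℝ, u₁ ∈ Ioo (0 : ℝ) 1 → v₁ ∈ Ioo (0 : ℝ) 1 →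
      u₂ ∈ Ioo (0 : ℝ) 1 → v₂ ∈ Ioo (0 : ℝ) 1 → H u₁ v₂ u₂ v₁ = H u₁ v₁ u₂ v₂)
    (hint : ∀ p₁ q₁ p₂ q₂ : ℝ, 0 < p₁ → p₁ < q₁ → q₁ < 1 → 0 < p₂ → p₂ < q₂ → q₂ < 1 →
      (∫ u₁ in p₁..q₁, ∫ v₁ in p₂..q₂, ∫ u₂ in p₁..q₁, ∫ v₂ in p₂..q₂, H u₁ v₁ u₂ v₂) = 0) :
    ∀ u₁ v₁ u₂ v₂ : ℝ, u₁ ∈ Ioo (0 : ℝ) 1 → v₁ ∈ Ioo (0 : ℝ) 1 →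
      u₂ ∈ Ioo (0 : ℝ) 1 → v₂ ∈ Ioo (0 : ℝ) 1 → H u₁ v₁ u₂ v₂ = 0 := by
  intro u₁ v₁ u₂ v₂ hu₁ hv₁ hu₂ hv₂
  obtain ⟨ε, (hε : 0 < ε), h₁, h₂, h₃, h₄⟩ :=
    (eventually_mem_nhdsWithin.and <| (eventually_mem_Ioo_one_sub hu₁).and <|
      (eventually_mem_Ioo_one_sub hv₁).and <| (eventually_mem_Ioo_one_sub hu₂).and
        (eventually_mem_Ioo_one_sub hv₂)).exists
  have hS : Icc ε (1 - ε) ⊆ Ioo 0 1 := Icc_subset_Ioo hε (by linarith [h₁.1, h₁.2])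
  refine eq_zero_of_forall_iteratedIntegral_diag_eq_zero_of_continuousOn hcont
    (fun x hx y hy z hz w hw => hsym1 x y z w hx hy hz hw)
    (fun x hx y hy z hz w hw => hsym2 x y z w hx hy hz hw) (h₁.1.trans h₁.2).le hS
    (fun p hp q hq c hc d hd hpq hcd =>
      hint p q c d (hS hp).1 hpq (hS hq).2 (hS hc).1 hcd (hS hd).2)
    u₁ h₁ v₁ h₂ u₂ h₃ v₂ h₄
end
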